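/- Let $G$ be a finite $2$-group that is realizable in characteristic $2^m$ for some $m \geq 1$. Then there exists a two-sided ideal $I$ of the group ring $\mathbb{Z}_{2^m}[G]$ such that the quotient ring $R = \mathbb{Z}_{2^m}[G]/I$ satisfies: (i) the group of units of $R$ is isomorphic to $G$; (ii) $R$ is a local ring; (iii) the cardinality of $R$ equals $2\,|G|$; and (iv) the group of units of $R$ is exactly the set $1 + M = \{1 + x : x \in M\}$, where $M$ is the unique maximal ideal of $R$. -/

import Mathlib

/-!
Let `S` realize `G`, with `e : Sˣ ≃* G`. The inclusion `G ≅ Sˣ ⊆ S` extends to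
`φ : ℤ/2^m[G] → S`, and `R = ℤ/2^m[G] ⧸ ker φ` is the subring of `S` spanned by `Sˣ`, so every
unit of `S` lies in `R` and `Rˣ ≅ Sˣ ≅ G`.

Since `G` is a `2`-group and `2` is nilpotent in `ℤ/2^m`, the augmentation ideal of `ℤ/2^m[G]` is
nil: induct on `|G|`, dividing by a nontrivial central `z`, whose `1 - z` is central and
nilpotent. Hence the group ring and its quotient `R` are local. Every unit `u` of `R` satisfies
`u ^ |G| = 1`, so `u - 1` is nilpotent; thus `u ↦ u - 1` maps the units of the local ring `R`
bijectively onto its nonunits, which gives `|R| = 2 |G|` and `Rˣ = 1 + 𝔪`.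
-/

/-- A finite group `G` is *realizable in characteristic `m`* if there exists a finite
(associative, unital) ring of characteristic exactly `m` whose group of units is
isomorphic to `G`. -/
def RealizableInChar (G : Type*) [Group G] (m : ℕ) : Prop :=
  ∃ (R : Type) (_ : Ring R) (_ : Fintype R), ringChar R = m ∧ Nonempty (Rˣ ≃* G)

theorem isNilpotent_sub_one_of_pow_two_pow_eq_one {R : Type*} [Ring R] (h2 : IsNilpotent (2 : R))
    {k : ℕ} {x : R} (hx : x ^ 2 ^ k = 1) : IsNilpotent (x - 1) := by
  induction k generalizing x with
  | zero => simp_all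
  | succ k ih =>
    have hsq : IsNilpotent (x ^ 2 - 1) := ih (by rwa [← pow_mul, ← pow_succ'])
    have hx1 : Commute (x ^ 2 - 1) (x - 1) :=
      (((Commute.refl x).sub_right (Commute.one_right x)).pow_left 2).sub_left (Commute.one_left _)
    -- `(x - 1) ^ 2 = (x ^ 2 - 1) - 2 * (x - 1)` is a difference of commuting nilpotents
    have : IsNilpotent ((x - 1) ^ 2) := by
      rw [show (x - 1) ^ 2 = (x ^ 2 - 1) - 2 * (x - 1) by noncomm_ring]
      exact ((Commute.ofNat_right _ 2).mul_right hx1).isNilpotent_sub hsq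
        ((Commute.ofNat_left 2 _).isNilpotent_mul_right h2)
    exact this.of_pow

theorem ZMod.isNilpotent_natCast_of_pow (p m : ℕ) : IsNilpotent (p : ZMod (p ^ m)) :=
  ⟨m, by rw [← Nat.cast_pow, ZMod.natCast_self]⟩

theorem ZMod.isUnit_or_isNilpotent_of_prime_pow {p : ℕ} (hp : p.Prime) (m : ℕ)
    (c : ZMod (p ^ m)) : IsUnit c ∨ IsNilpotent c := by
  have : NeZero (p ^ m) := ⟨pow_ne_zero m hp.ne_zero⟩
  obtain ⟨a, rfl⟩ := ZMod.natCast_zmod_surjective c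
  by_cases hpa : p ∣ a
  · obtain ⟨b, rfl⟩ := hpa
    right
    rw [Nat.cast_mul]
    exact (Commute.all _ _).isNilpotent_mul_right (ZMod.isNilpotent_natCast_of_pow p m)
  · left
    rw [ZMod.isUnit_iff_coprime]
    exact ((Nat.Prime.coprime_iff_not_dvd hp).mpr hpa).symm.pow_right m

theorem Subgroup.normal_of_le_center {G : Type*} [Group G] {H : Subgroup G}
    (h : H ≤ Subgroup.center G) : H.Normal :=
  ⟨fun n hn g => by rwa [Subgroup.mem_center_iff.mp (h hn) g, mul_inv_cancel_right]⟩

theorem TwoSidedIdeal.exists_eq_mul_of_mem_span_singleton {R : Type*} [Ring R] {c x : R}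
    (hc : ∀ y, Commute c y) (hx : x ∈ TwoSidedIdeal.span {c}) : ∃ w, x = c * w := by
  induction hx using TwoSidedIdeal.span_induction with
  | mem x hx => exact ⟨1, by rw [hx, mul_one]⟩
  | zero => exact ⟨0, (mul_zero c).symm⟩
  | add x y _ _ hx hy =>
    obtain ⟨a, rfl⟩ := hx
    obtain ⟨b, rfl⟩ := hy
    exact ⟨a + b, (mul_add c a b).symm⟩
  | neg x _ hx =>
    obtain ⟨a, rfl⟩ := hx
    exact ⟨-a, (mul_neg c a).symm⟩
  | left_absorb a x _ hx =>
    obtain ⟨b, rfl⟩ := hx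
    exact ⟨a * b, by rw [← mul_assoc, ← (hc a).eq, mul_assoc]⟩
  | right_absorb b x _ hx =>
    obtain ⟨a, rfl⟩ := hx
    exact ⟨a * b, mul_assoc c a b⟩

namespace MonoidAlgebra

variable {k G : Type*} [CommRing k] [Group G]

theorem commute_one_sub_of {z : G} (hz : z ∈ Subgroup.center G) (y : MonoidAlgebra k G) :
    Commute (1 - of k G z) y :=
  (Commute.one_left y).sub_left
    (single_commute (fun g => (Subgroup.mem_center_iff.mp hz g).symm) (Commute.all 1) y)

theorem exists_eq_one_sub_mul_of_mapDomainRingHom_eq_zero {z : G} (hz : z ∈ Subgroup.center G)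
    {N : Subgroup G} [N.Normal] (hN : N ≤ Subgroup.zpowers z) {x : MonoidAlgebra k G}
    (hx : mapDomainRingHom k (QuotientGroup.mk' N) x = 0) : ∃ w, x = (1 - of k G z) * w := by
  -- `z` dies in `k[G] ⧸ (1 - z)`, so the quotient map `k[G] → k[G] ⧸ (1 - z)` factors through
  -- `k[G ⧸ N]`.
  set K := TwoSidedIdeal.span {1 - of k G z}
  have hzK : K.ringCon.mk' (of k G z) = 1 := by
    have : 1 - of k G z ∈ K := TwoSidedIdeal.subset_span rfl
    rw [← TwoSidedIdeal.ker_ringCon_mk' K, TwoSidedIdeal.mem_ker, map_sub, map_one,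
      sub_eq_zero] at this
    exact this.symm
  let f : G →* K.ringCon.Quotient := (K.ringCon.mk' : MonoidAlgebra k G →* _).comp (of k G)
  have hNf : N ≤ f.ker := hN.trans (Subgroup.zpowers_le.mpr (by simpa [f] using hzK))
  let ρ := lift k K.ringCon.Quotient (G ⧸ N) (QuotientGroup.lift N f hNf)
  have hρ : (ρ : MonoidAlgebra k (G ⧸ N) →+* _).comp (mapDomainRingHom k (QuotientGroup.mk' N)) =
      K.ringCon.mk' := by
    refine ringHom_ext (fun r => ?_) (fun g => ?_)
    · simp [ρ, mapDomainRingHom, Algebra.smul_def, ← RingCon.coe_algebraMap]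
    · simp [ρ, f, mapDomainRingHom]
  have hxK : x ∈ K := by
    rw [← TwoSidedIdeal.ker_ringCon_mk' K, TwoSidedIdeal.mem_ker, ← hρ, RingHom.comp_apply, hx,
      map_zero]
  exact TwoSidedIdeal.exists_eq_mul_of_mem_span_singleton (commute_one_sub_of hz) hxK

-- `lift k k G 1 : k[G] → k` is the augmentation map.

theorem lift_one_mapDomainRingHom {H : Type*} [Group H] (f : G →* H) (x : MonoidAlgebra k G) :
    lift k k H 1 (mapDomainRingHom k f x) = lift k k G 1 x := by
  induction x using induction_linear with
  | zero => simp
  | add a b ha hb => rw [map_add, map_add, map_add, ha, hb]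
  | single g c => simp [mapDomainRingHom]

theorem eq_algebraMap_lift_one [Subsingleton G] (x : MonoidAlgebra k G) :
    x = algebraMap k _ (lift k k G 1 x) := by
  induction x using induction_linear with
  | zero => simp
  | add a b ha hb => rw [map_add, map_add, ← ha, ← hb]
  | single g c => simp [Subsingleton.elim g 1]

theorem isNilpotent_one_sub_of (h2 : IsNilpotent (2 : k)) (hG : IsPGroup 2 G) (g : G) :
    IsNilpotent (1 - of k G g) := by
  obtain ⟨n, hn⟩ := hG g
  rw [← neg_sub, isNilpotent_neg_iff]
  exact isNilpotent_sub_one_of_pow_two_pow_eq_one (h2.map (algebraMap k _))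
    (by rw [← map_pow, hn, map_one])

theorem isNilpotent_of_isNilpotent_lift_one (h2 : IsNilpotent (2 : k)) [Finite G]
    (hG : IsPGroup 2 G) {x : MonoidAlgebra k G} (hx : IsNilpotent (lift k k G 1 x)) :
    IsNilpotent x := by
  induction hn : Nat.card G using Nat.strong_induction_on generalizing G with
  | _ n ih =>
  rcases subsingleton_or_nontrivial G with hG1 | hG1
  · rw [eq_algebraMap_lift_one x]
    exact hx.map _
  have := hG.center_nontrivial
  obtain ⟨⟨z, hzc⟩, hz1⟩ := exists_ne (1 : Subgroup.center G)
  have : (Subgroup.zpowers z).Normal := Subgroup.normal_of_le_center (Subgroup.zpowers_le.mpr hzc)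
  have hcard : Nat.card (G ⧸ Subgroup.zpowers z) < n := by
    have hz1 : 1 < Nat.card (Subgroup.zpowers z) :=
      (Subgroup.one_lt_card_iff_ne_bot _).mpr (by simpa using fun h => hz1 (Subtype.ext h))
    rw [← hn, Subgroup.card_eq_card_quotient_mul_card_subgroup (Subgroup.zpowers z)]
    exact lt_mul_of_one_lt_right Nat.card_pos hz1
  obtain ⟨a, ha⟩ := ih _ hcard (hG.to_quotient _)
    (x := mapDomainRingHom k (QuotientGroup.mk' (Subgroup.zpowers z)) x)
    (by rwa [lift_one_mapDomainRingHom]) rfl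
  obtain ⟨w, hw⟩ := exists_eq_one_sub_mul_of_mapDomainRingHom_eq_zero hzc le_rfl
    (x := x ^ a) (by rw [map_pow, ha])
  obtain ⟨b, hb⟩ :=
    (commute_one_sub_of hzc w).isNilpotent_mul_right (isNilpotent_one_sub_of h2 hG z)
  exact ⟨a * b, by rw [pow_mul, hw, hb]⟩

theorem isUnit_of_isUnit_lift_one (h2 : IsNilpotent (2 : k)) [Finite G] (hG : IsPGroup 2 G)
    {x : MonoidAlgebra k G} (hx : IsUnit (lift k k G 1 x)) : IsUnit x := by
  set c := algebraMap k (MonoidAlgebra k G) (lift k k G 1 x)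
  have hxc : IsNilpotent (x - c) :=
    isNilpotent_of_isNilpotent_lift_one h2 hG (by simp [c])
  have := hxc.isUnit_add_right_of_commute (hx.map _) (Algebra.commutes _ _).symm
  rwa [sub_add_cancel] at this

theorem isLocalRing_of_isPGroup_two [Nontrivial k] (hk : ∀ a : k, IsUnit a ∨ IsNilpotent a)
    (h2 : IsNilpotent (2 : k)) [Finite G] (hG : IsPGroup 2 G) :
    IsLocalRing (MonoidAlgebra k G) := by
  refine .of_isUnit_or_isUnit_one_sub_self fun x => (hk (lift k k G 1 x)).imp
    (isUnit_of_isUnit_lift_one h2 hG) fun hx => isUnit_of_isUnit_lift_one h2 hG ?_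
  simpa using hx.isUnit_one_sub

end MonoidAlgebra

theorem Function.Surjective.isLocalRing {R S : Type*} [Ring R] [IsLocalRing R] [Ring S]
    [Nontrivial S] {f : R →+* S} (hf : Function.Surjective f) : IsLocalRing S := by
  refine .of_isUnit_or_isUnit_one_sub_self fun a => ?_
  obtain ⟨b, rfl⟩ := hf a
  simpa using (IsLocalRing.isUnit_or_isUnit_of_add_one (add_sub_cancel b 1)).imp
    (IsUnit.map f) (IsUnit.map f)

namespace IsLocalRing

variable {R : Type*} [Ring R] [IsLocalRing R]

theorem isUnit_iff_not_isUnit_sub_one (h : ∀ u : R, IsUnit u → ¬IsUnit (u - 1)) (x : R) :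
    IsUnit x ↔ ¬IsUnit (x - 1) := by
  refine ⟨h x, fun hx => ?_⟩
  refine (isUnit_or_isUnit_of_add_one (add_sub_cancel x 1)).resolve_right fun h1 => hx ?_
  rwa [← neg_sub, IsUnit.neg_iff]

theorem card_eq_two_mul_card_units [Finite R] (h : ∀ u : R, IsUnit u → ¬IsUnit (u - 1)) :
    Nat.card R = 2 * Nat.card Rˣ := by
  classical
  have hunits : Nat.card Rˣ = Nat.card {x : R // IsUnit x} :=
    Nat.card_congr (Equiv.ofInjective _ Units.val_injective)
  have hnonunits : {x : R // IsUnit x} ≃ {x : R // ¬IsUnit x} :=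
    (Equiv.subRight 1).subtypeEquiv (isUnit_iff_not_isUnit_sub_one h)
  rw [← Nat.card_congr (Equiv.sumCompl fun x : R => IsUnit x), Nat.card_sum, hunits,
    ← Nat.card_congr hnonunits, two_mul]

end IsLocalRing

theorem not_isUnit_sub_one_of_card_units_eq_two_pow {R : Type*} [Ring R] [Nontrivial R]
    (h2 : IsNilpotent (2 : R)) {n : ℕ} (hn : Nat.card Rˣ = 2 ^ n) (u : R) (hu : IsUnit u) :
    ¬IsUnit (u - 1) := by
  obtain ⟨u, rfl⟩ := hu
  refine (isNilpotent_sub_one_of_pow_two_pow_eq_one h2 (k := n) ?_).not_isUnit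
  rw [← Units.val_pow_eq_pow_val, ← hn, pow_card_eq_one', Units.val_one]

noncomputable def TwoSidedIdeal.unitsQuotientKerEquiv {A S : Type*} [Ring A] [Ring S]
    (φ : A →+* S) (hφ : ∀ u : Sˣ, ∃ v : Aˣ, Units.map φ v = u) :
    ((TwoSidedIdeal.ker φ).ringCon.Quotient)ˣ ≃* Sˣ :=
  let ψ : (TwoSidedIdeal.ker φ).ringCon.Quotient →+* S := RingCon.kerLift φ
  MulEquiv.ofBijective (Units.map ψ.toMonoidHom)
    ⟨Units.map_injective (RingCon.kerLift_injective φ), fun u => by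
      obtain ⟨v, rfl⟩ := hφ u
      exact ⟨Units.map (TwoSidedIdeal.ker φ).ringCon.mk'.toMonoidHom v, Units.ext rfl⟩⟩

/-- If a finite 2-group `G` is realizable in characteristic `2 ^ m` (`m ≥ 1`), then there
is a two-sided ideal `I` of the group ring `(ℤ/2^mℤ)[G]` whose quotient ring `R`
satisfies: (i) `Rˣ ≅ G`; (ii) `R` is local; (iii) `|R| = 2|G|`; and (iv) the units of `R`
are exactly the elements `1 + x` with `x` in the unique maximal ideal of `R` (which, `R`
being local, is the set of nonunits of `R`). -/
theorem stmt_8 (G : Type*) [Group G] [Fintype G]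
    (h2 : ∃ n : ℕ, Fintype.card G = 2 ^ n) (m : ℕ) (hm : 1 ≤ m)
    (hreal : RealizableInChar G (2 ^ m)) :
    ∃ I : TwoSidedIdeal (MonoidAlgebra (ZMod (2 ^ m)) G),
      Nonempty ((I.ringCon.Quotient)ˣ ≃* G) ∧
      IsLocalRing I.ringCon.Quotient ∧
      Nat.card I.ringCon.Quotient = 2 * Nat.card G ∧
      ∀ x : I.ringCon.Quotient, IsUnit x ↔ ∃ y : I.ringCon.Quotient,
        y ∈ nonunits I.ringCon.Quotient ∧ x = 1 + y := by
  obtain ⟨n, hn⟩ := h2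
  obtain ⟨S, _, _, hchar, ⟨e⟩⟩ := hreal
  have : CharP S (2 ^ m) := hchar ▸ ringChar.charP S
  have h1 : 1 < 2 ^ m := Nat.one_lt_two_pow (by omega)
  have : Fact (1 < 2 ^ m) := ⟨h1⟩
  have : Nontrivial S := CharP.nontrivial_of_char_ne_one h1.ne'
  let := ZMod.algebra S (2 ^ m)
  have h2k : IsNilpotent (2 : ZMod (2 ^ m)) := by
    exact_mod_cast ZMod.isNilpotent_natCast_of_pow 2 m
  let φ : MonoidAlgebra (ZMod (2 ^ m)) G →+* S :=
    MonoidAlgebra.lift (ZMod (2 ^ m)) S G ((Units.coeHom S).comp e.symm.toMonoidHom)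
  let I := TwoSidedIdeal.ker φ
  let ψ : I.ringCon.Quotient →+* S := RingCon.kerLift φ
  let eG : I.ringCon.Quotientˣ ≃* G := (TwoSidedIdeal.unitsQuotientKerEquiv _ fun u =>
    ⟨(MonoidAlgebra.of _ G).toHomUnits (e u), Units.ext (by simp [φ])⟩).trans e
  have : Nontrivial I.ringCon.Quotient := ψ.domain_nontrivial
  have : Finite I.ringCon.Quotient := Finite.of_injective ψ (RingCon.kerLift_injective φ)
  have : IsLocalRing (MonoidAlgebra (ZMod (2 ^ m)) G) :=
    MonoidAlgebra.isLocalRing_of_isPGroup_two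
      (ZMod.isUnit_or_isNilpotent_of_prime_pow Nat.prime_two m) h2k
      (IsPGroup.of_card (n := n) (by rwa [Nat.card_eq_fintype_card]))
  have : IsLocalRing I.ringCon.Quotient := I.ringCon.mk'_surjective.isLocalRing
  have h2Q : IsNilpotent (2 : I.ringCon.Quotient) := by
    have := h2k.map (algebraMap (ZMod (2 ^ m)) I.ringCon.Quotient)
    rwa [map_ofNat] at this
  have hres : ∀ u : I.ringCon.Quotient, IsUnit u → ¬IsUnit (u - 1) :=
    not_isUnit_sub_one_of_card_units_eq_two_pow h2Q
      (by rw [Nat.card_congr eG.toEquiv, Nat.card_eq_fintype_card, hn])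
  refine ⟨I, ⟨eG⟩, inferInstance, ?_, fun x => ?_⟩
  · rw [IsLocalRing.card_eq_two_mul_card_units hres, Nat.card_congr eG.toEquiv]
  · rw [IsLocalRing.isUnit_iff_not_isUnit_sub_one hres]
    exact ⟨fun hx => ⟨x - 1, hx, by abel⟩, by rintro ⟨y, hy, rfl⟩; simpa using hy⟩
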